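/- Let W_L = e_0 e_1 ... e_{k-1} e_0 be a cycle of even length k in the intersection graph of a hypergraph H = (V,E) such that |e_i ∩ e_{i+1}| ≥ 2 for all i (indices mod k). Then there exist vertices v_0,...,v_{k-1} ∈ V with v_i ∈ e_{i-1} ∩ e_i (indices mod k) and v_{i-1} ≠ v_i for all i, i.e., v_0 e_0 v_1 e_1 ... v_{k-1} e_{k-1} v_0 is a closed strict trail in H. -/

import Mathlib

/-!
Choosing `vᵢ₊₁` in `eᵢ ∩ eᵢ₊₁` turns the claim into the 2-choosability of an even cycle with
lists `Lᵢ = eᵢ ∩ eᵢ₊₁`. If some `Lⱼ₊₁` has an element `c` outside `Lⱼ`, start at `c` and choose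
greedily around the cycle: the last choice lies in `Lⱼ`, so it cannot clash with `c`. Otherwise
`Lⱼ₊₁ ⊆ Lⱼ` for all `j`, so all lists are equal, and alternating two of their elements works
because the cycle is even.
-/

open Finset

/-- The cyclically-next index in `Fin n`. -/
def nxt {n : ℕ} (i : Fin n) : Fin n := ⟨(i.1 + 1) % n, Nat.mod_lt _ i.pos⟩

/-- A closed strict trail `v₀ e₀ v₁ e₁ … v_{n-1} e_{n-1} v₀` in the hypergraph whose
edges are given by the family `E` (indexed by `ι`, so parallel edges are allowed):
a closed walk of length `n ≥ 2` with consecutive anchor vertices distinct,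
each `vᵢ, v_{i+1} ∈ eᵢ`, and pairwise distinct edges. -/
structure CST {V ι : Type} (E : ι → Finset V) where
  n : ℕ
  hn : 2 ≤ n
  vert : Fin n → V
  edge : Fin n → ι
  mem_left : ∀ i, vert i ∈ E (edge i)
  mem_right : ∀ i, vert (nxt i) ∈ E (edge i)
  ne_next : ∀ i, vert i ≠ vert (nxt i)
  edge_inj : Function.Injective edge

/-- An Euler family: a finite family of pairwise anchor-disjoint closed strict trails
such that every edge of the hypergraph lies in exactly one trail. -/
def HasEulerFamily {V ι : Type} (E : ι → Finset V) : Prop :=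
  ∃ (m : ℕ) (T : Fin m → CST E),
    (∀ e : ι, ∃ k i, (T k).edge i = e) ∧
    (∀ k k' i i', (T k).edge i = (T k').edge i' → k = k') ∧
    (∀ k k' i i', (T k).vert i = (T k').vert i' → k = k')

/-- An Euler tour: a single closed strict trail traversing every edge (exactly once). -/
def HasEulerTour {V ι : Type} (E : ι → Finset V) : Prop :=
  ∃ T : CST E, Function.Surjective T.edge

/-- The degree of a vertex: the number of edges containing it. -/
def hdeg {V ι : Type} [Fintype ι] [DecidableEq V] (E : ι → Finset V) (v : V) : ℕ :=
  (Finset.univ.filter fun e => v ∈ E e).card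

/-- The skeleton graph of the hypergraph: two distinct vertices are adjacent
iff they lie in a common edge.  Walk-connectivity in the hypergraph coincides with
connectivity in the skeleton. -/
def skeleton {V ι : Type} (E : ι → Finset V) : SimpleGraph V where
  Adj u w := u ≠ w ∧ ∃ e, u ∈ E e ∧ w ∈ E e
  symm := ⟨fun u w h => ⟨h.1.symm, h.2.imp fun _ he => ⟨he.2, he.1⟩⟩⟩
  loopless := ⟨fun _ h => h.1 rfl⟩

/-- The number of connected components of the hypergraph. -/
noncomputable def ccCount {V ι : Type} (E : ι → Finset V) : ℕ :=
  Nat.card (skeleton E).ConnectedComponent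

open Fin.NatCast

lemma nxt_eq_add_one {m : ℕ} (i : Fin (m + 1)) : nxt i = i + 1 :=
  Fin.ext (by simp [nxt, Fin.val_add])

lemma exists_seq_mem_ne_succ {V : Type} (L : ℕ → Finset V) (hL : ∀ n, 1 < (L n).card)
    {c : V} (hc : c ∈ L 0) :
    ∃ u : ℕ → V, u 0 = c ∧ (∀ n, u n ∈ L n) ∧ ∀ n, u (n + 1) ≠ u n := by
  choose next hnext_mem hnext_ne using fun n x => exists_mem_ne (hL (n + 1)) x
  let u : ℕ → V := fun n => Nat.rec c (fun n x => next n x) n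
  refine ⟨u, rfl, ?_, fun n => hnext_ne n (u n)⟩
  rintro (_ | n)
  · exact hc
  · exact hnext_mem n (u n)

lemma le_of_forall_add_one_le_cyclic {α : Type} [Preorder α] {m : ℕ} {f : Fin (m + 1) → α}
    (hf : ∀ j, f (j + 1) ≤ f j) (i j : Fin (m + 1)) : f i ≤ f j := by
  have key : ∀ (n : ℕ) (j : Fin (m + 1)), f (j + (n : Fin (m + 1))) ≤ f j := by
    intro n
    induction n with
    | zero => simp
    | succ n ih =>
      intro j
      simpa [add_assoc] using (hf (j + (n : Fin (m + 1)))).trans (ih j)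
  simpa using key (i - j).val j

section CyclicChoice

variable {V : Type} {m : ℕ} (L : Fin (m + 1) → Finset V)

lemma exists_cyclic_choice_of_not_subset_last (hL : ∀ i, 1 < (L i).card)
    (h0 : ¬ L 0 ⊆ L (Fin.last m)) :
    ∃ u : Fin (m + 1) → V, ∀ i, u i ∈ L i ∧ u i ≠ u (i + 1) := by
  obtain ⟨c, hc, hc_last⟩ := not_subset.mp h0
  obtain ⟨u, hu0, hu_mem, hu_ne⟩ :=
    exists_seq_mem_ne_succ (fun n => L (n : Fin (m + 1))) (fun n => hL n) (by simpa using hc)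
  refine ⟨fun i => u i, fun i => ⟨by simpa using hu_mem i, ?_⟩⟩
  rcases (Fin.le_last i).lt_or_eq with hi | rfl
  · simpa [Fin.val_add_one_of_lt hi] using (hu_ne i).symm
  · have hlast : u m ∈ L (Fin.last m) := by simpa using hu_mem m
    simp only [Fin.last_add_one, Fin.val_zero, hu0, Fin.val_last]
    exact ne_of_mem_of_not_mem hlast hc_last

lemma exists_cyclic_choice_of_not_subset (hL : ∀ i, 1 < (L i).card) {j : Fin (m + 1)}
    (hj : ¬ L (j + 1) ⊆ L j) :
    ∃ u : Fin (m + 1) → V, ∀ i, u i ∈ L i ∧ u i ≠ u (i + 1) := by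
  have hlast : Fin.last m + (j + 1) = j := by
    rw [add_comm j, ← add_assoc, Fin.last_add_one, zero_add]
  obtain ⟨u, hu⟩ := exists_cyclic_choice_of_not_subset_last (fun i => L (i + (j + 1)))
    (fun i => hL _) (by simpa [hlast] using hj)
  refine ⟨fun i => u (i - (j + 1)), fun i => ⟨by simpa using (hu (i - (j + 1))).1, ?_⟩⟩
  have hshift : i + 1 - (j + 1) = i - (j + 1) + 1 := by abel
  simpa [hshift] using (hu (i - (j + 1))).2

lemma even_val_add_one_iff (hm : Even (m + 1)) (i : Fin (m + 1)) :
    Even (i + 1).val ↔ ¬ Even i.val := by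
  rcases (Fin.le_last i).lt_or_eq with hi | rfl
  · rw [Fin.val_add_one_of_lt hi, Nat.even_add_one]
  · simpa [Fin.last_add_one, Nat.not_even_iff_odd] using Nat.even_add_one.mp hm

lemma exists_cyclic_choice_of_forall_add_one_subset (hm : Even (m + 1))
    (hL : ∀ i, 1 < (L i).card) (hsub : ∀ j, L (j + 1) ⊆ L j) :
    ∃ u : Fin (m + 1) → V, ∀ i, u i ∈ L i ∧ u i ≠ u (i + 1) := by
  obtain ⟨a, ha, b, hb, hab⟩ := one_lt_card.mp (hL 0)
  have hmem {x : V} (hx : x ∈ L 0) (i : Fin (m + 1)) : x ∈ L i :=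
    le_of_forall_add_one_le_cyclic hsub 0 i hx
  refine ⟨fun i => if Even i.val then a else b, fun i => ⟨?_, ?_⟩⟩
  · dsimp only
    split_ifs
    exacts [hmem ha i, hmem hb i]
  · by_cases hi : Even i.val <;> simp [hi, even_val_add_one_iff hm, hab, hab.symm]

theorem exists_cyclic_choice_of_even (hm : Even (m + 1)) (hL : ∀ i, 1 < (L i).card) :
    ∃ u : Fin (m + 1) → V, ∀ i, u i ∈ L i ∧ u i ≠ u (i + 1) := by
  by_cases h : ∃ j, ¬ L (j + 1) ⊆ L j
  · obtain ⟨j, hj⟩ := h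
    exact exists_cyclic_choice_of_not_subset L hL hj
  · push Not at h
    exact exists_cyclic_choice_of_forall_add_one_subset L hm hL h

end CyclicChoice

theorem stmt13_general {V ι : Type} [DecidableEq V]
    (E : ι → Finset V) (k : ℕ) (hkeven : Even k)
    (e : Fin k → ι)
    (hcyc : ∀ i, 2 ≤ (E (e i) ∩ E (e (nxt i))).card) :
    ∃ v : Fin k → V, ∀ i, v i ∈ E (e i) ∧ v (nxt i) ∈ E (e i) ∧ v i ≠ v (nxt i) := by
  rcases k with _ | m
  · exact ⟨Fin.elim0, fun i => i.elim0⟩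
  simp only [nxt_eq_add_one] at hcyc ⊢
  obtain ⟨u, hu⟩ := exists_cyclic_choice_of_even (fun i => E (e i) ∩ E (e (i + 1))) hkeven hcyc
  refine ⟨fun i => u (i - 1), fun i => ⟨?_, ?_, ?_⟩⟩
  · simpa using (mem_inter.mp (hu (i - 1)).1).2
  · simpa using (mem_inter.mp (hu i).1).1
  · simpa using (hu (i - 1)).2

/-- Let `e₀ e₁ … e_{k-1} e₀` be a cycle of even length `k` in the
intersection graph of a hypergraph, with `|eᵢ ∩ e_{i+1}| ≥ 2` for all `i` (mod `k`).
Then one can choose vertices `v₀,…,v_{k-1}` with `vᵢ, v_{i+1} ∈ eᵢ` and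
`vᵢ ≠ v_{i+1}` (indices mod `k`), i.e. `v₀ e₀ v₁ e₁ … v_{k-1} e_{k-1} v₀` is a
closed strict trail. -/
theorem stmt13 {V ι : Type} [DecidableEq V] [Nonempty V]
    (E : ι → Finset V) (k : ℕ) (hk : 3 ≤ k) (hkeven : Even k)
    (e : Fin k → ι) (einj : Function.Injective e)
    (hcyc : ∀ i, 2 ≤ (E (e i) ∩ E (e (nxt i))).card) :
    ∃ v : Fin k → V, ∀ i, v i ∈ E (e i) ∧ v (nxt i) ∈ E (e i) ∧ v i ≠ v (nxt i) :=
  stmt13_general E k hkeven e hcyc
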